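/- arXiv:2407.19585 — 2 statements merged into one kernel-verified Lean document; each statement's English description precedes it below -/
import Mathlib

section
/- Let k be a field, R = k[x,y,z] localized at the maximal ideal (x,y,z), and σ : ℤ_{>0} → ℤ_{>0} any function. Define I₀ = R and I_n = (z^{n+2}) + z^{n+1}(x,y)^{σ(n)} for n ≥ 1. Then {I_n} is a graded filtration of R (i.e., I_m I_n ⊆ I_{m+n} for all m, n ≥ 0) and λ_R(I_n / m_R I_n) = σ(n) + 2 for all n ≥ 1. -/
/-! For `n ≥ 1` both summands of `I_n` lie in `(z^{n+1})`, so `I_m I_n ⊆ (z^{m+n+2}) ⊆ I_{m+n}`.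

`I_n` is generated by the `σ(n) + 2` monomials `z^{n+2}` and `z^{n+1} x^j y^{σ(n)-j}`, and since
`σ(n) ≥ 1` no one of their exponent vectors dominates another. After clearing denominators, a
relation `∑ cᵢ gᵢ ∈ m I_n` becomes `u ∑ Cᵢ gᵢ ∈ (x, y, z) · (gⱼ)` in `k[x, y, z]` with `u(0) ≠ 0`.
Every monomial of the right-hand side is a proper multiple of some `gⱼ`, so the coefficient of
`gᵢ` on the left, `Cᵢ(0) u(0)`, vanishes and `cᵢ ∈ m`. Thus `I_n / m I_n ≅ (R / m)^{σ(n) + 2}`,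
a module of length `σ(n) + 2`. -/

open MvPolynomial

/-- The module `I / m_R I` for an ideal `I` of a local ring `R`. -/
abbrev fiberModule (R : Type*) [CommRing R] [IsLocalRing R] (I : Ideal R) :=
  I ⧸ (Submodule.comap (I : Submodule R R).subtype
        (IsLocalRing.maximalIdeal R • (I : Submodule R R)))

theorem exists_compositionSeries_of_length_eq {R M : Type*} [Ring R] [AddCommGroup M]
    [Module R M] {d : ℕ} (h : Module.length R M = d) :
    ∃ s : CompositionSeries (Submodule R M), s.head = ⊥ ∧ s.last = ⊤ ∧ s.length = d := by
  obtain ⟨s, hbot, htop⟩ := isFiniteLength_iff_exists_compositionSeries.mp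
    (Module.length_ne_top_iff.mp (h ▸ ENat.natCast_ne_top d))
  exact ⟨s, hbot, htop, by exact_mod_cast (Module.length_compositionSeries s hbot htop).trans h⟩

theorem Module.length_pi_quotient_of_isMaximal {R : Type*} [CommRing R] (m : Ideal R)
    [m.IsMaximal] (ι : Type*) [Fintype ι] :
    Module.length R (ι → R ⧸ m) = Fintype.card ι := by
  have : IsSimpleModule R (R ⧸ m) :=
    isSimpleModule_iff_isCoatom.mpr (Ideal.isMaximal_def.mp ‹_›)
  simp

section Fiber

open IsLocalRing

variable {R : Type*} [CommRing R] [IsLocalRing R] {ι : Type*} [Fintype ι]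

theorem length_fiberModule_eq_card (J : Ideal R) (g : ι → R)
    (hspan : Ideal.span (Set.range g) = J)
    (hindep : ∀ c : ι → R, ∑ i, c i * g i ∈ maximalIdeal R * J →
      ∀ i, c i ∈ maximalIdeal R) :
    Module.length R (fiberModule R J) = Fintype.card ι := by
  classical
  have hgJ (c : ι → R) : Fintype.linearCombination R g c ∈ (J : Submodule R R) := by
    rw [← hspan, Fintype.linearCombination_apply]
    exact Submodule.sum_mem _ fun i _ ↦ Ideal.mul_mem_left _ _ (Ideal.subset_span ⟨i, rfl⟩)
  let Φ : (ι → R) →ₗ[R] fiberModule R J :=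
    Submodule.mkQ _ ∘ₗ (Fintype.linearCombination R g).codRestrict _ hgJ
  have hsurj : Function.Surjective Φ := by
    refine (Submodule.mkQ_surjective _).comp fun ⟨a, ha⟩ ↦ ?_
    rw [← hspan] at ha
    obtain ⟨c, rfl⟩ := Submodule.mem_span_range_iff_exists_fun R |>.mp ha
    exact ⟨c, by ext; simp [Fintype.linearCombination_apply]⟩
  have hker : LinearMap.ker Φ = Submodule.pi Set.univ fun _ ↦ maximalIdeal R := by
    ext c
    simp only [Φ, LinearMap.mem_ker, LinearMap.comp_apply, Submodule.mkQ_apply,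
      Submodule.Quotient.mk_eq_zero, Submodule.mem_comap, Submodule.subtype_apply,
      LinearMap.codRestrict_apply, Fintype.linearCombination_apply, smul_eq_mul,
      Submodule.mem_pi, Set.mem_univ, true_implies]
    exact ⟨hindep c, fun hc ↦ Ideal.sum_mem _ fun i _ ↦
      Ideal.mul_mem_mul (hc i) (hspan ▸ Ideal.subset_span ⟨i, rfl⟩)⟩
  rw [← (LinearMap.quotKerEquivOfSurjective Φ hsurj).length_eq,
    (Submodule.quotEquivOfEq _ _ hker).length_eq, (Submodule.quotientPi _).length_eq]
  exact Module.length_pi_quotient_of_isMaximal _ ι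

end Fiber

section Monomial

variable {σ R : Type*} [CommSemiring R]

theorem MvPolynomial.mem_span_range_X_iff {f : MvPolynomial σ R} :
    f ∈ Ideal.span (Set.range X) ↔ constantCoeff f = 0 := by
  rw [← Set.image_univ, mem_ideal_span_X_image, constantCoeff_eq, ← notMem_support_iff]
  simp only [Set.mem_univ, true_and]
  refine ⟨fun h h0 ↦ ?_, fun h m hm ↦ ?_⟩
  · obtain ⟨i, hi⟩ := h 0 h0
    exact hi rfl
  · by_contra! hc
    exact h (by rwa [show m = 0 from Finsupp.ext hc] at hm)

variable {ι : Type*} {ν : ι → σ →₀ ℕ}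

theorem MvPolynomial.coeff_sum_mul_monomial_of_antichain [Fintype ι]
    (hν : ∀ i j, ν i ≤ ν j → i = j)
    (C : ι → MvPolynomial σ R) (i : ι) :
    coeff (ν i) (∑ j, C j * monomial (ν j) 1) = constantCoeff (C i) := by
  classical
  rw [coeff_sum, Finset.sum_eq_single i]
  · rw [coeff_mul_monomial', if_pos le_rfl, tsub_self, mul_one, constantCoeff_eq]
  · intro j _ hji
    rw [coeff_mul_monomial', if_neg fun h ↦ hji (hν j i h)]
  · simp

theorem MvPolynomial.coeff_eq_zero_of_mem_span_X_mul_span_monomial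
    (hν : ∀ i j, ν i ≤ ν j → i = j) {f : MvPolynomial σ R}
    (hf : f ∈ Ideal.span (Set.range X) * Ideal.span (Set.range fun j ↦ monomial (ν j) (1 : R)))
    (i : ι) : coeff (ν i) f = 0 := by
  have hle : Ideal.span (Set.range X) * Ideal.span (Set.range fun j ↦ monomial (ν j) (1 : R)) ≤
      Ideal.span ((fun e ↦ monomial e 1) '' {e | ∃ a j, e = Finsupp.single a 1 + ν j}) := by
    rw [Ideal.span_mul_span']
    refine Ideal.span_mono ?_
    rintro _ ⟨_, ⟨a, rfl⟩, _, ⟨j, rfl⟩, rfl⟩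
    exact ⟨_, ⟨a, j, rfl⟩, by simp [X, monomial_mul]⟩
  by_contra h
  obtain ⟨_, ⟨a, j, rfl⟩, hle'⟩ :=
    mem_ideal_span_monomial_image.mp (hle hf) _ (mem_support_iff.mpr h)
  obtain rfl := hν j i (le_trans le_add_self hle')
  exact Finsupp.single_ne_zero.mpr one_ne_zero
    (nonpos_iff_eq_zero.mp (add_le_iff_nonpos_left.mp hle'))

theorem MvPolynomial.constantCoeff_mul_eq_zero_of_sum_mul_monomial_mem [Fintype ι]
    (hν : ∀ i j, ν i ≤ ν j → i = j) (C : ι → MvPolynomial σ R) (u : MvPolynomial σ R)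
    (h : u * ∑ j, C j * monomial (ν j) 1 ∈
      Ideal.span (Set.range X) * Ideal.span (Set.range fun j ↦ monomial (ν j) (1 : R)))
    (i : ι) : constantCoeff (C i) * constantCoeff u = 0 := by
  rw [← map_mul, ← coeff_sum_mul_monomial_of_antichain hν (fun j ↦ C j * u) i,
    ← coeff_eq_zero_of_mem_span_X_mul_span_monomial hν h i, Finset.mul_sum]
  simp only [mul_comm u, mul_right_comm]

end Monomial

theorem mem_maximalIdeal_of_sum_mul_algebraMap_mem_map {S : Type*} [CommRing S] (P : Ideal S)
    [P.IsPrime] {ι : Type*} [Fintype ι] (Γ : ι → S) (K : Ideal S)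
    (hK : ∀ (C : ι → S) (u : S), u ∉ P → u * ∑ i, C i * Γ i ∈ K → ∀ i, C i ∈ P)
    (c : ι → Localization.AtPrime P)
    (hc : ∑ i, c i * algebraMap S _ (Γ i) ∈ K.map (algebraMap S (Localization.AtPrime P)))
    (i : ι) : c i ∈ IsLocalRing.maximalIdeal (Localization.AtPrime P) := by
  obtain ⟨t, ht⟩ := IsLocalization.exist_integer_multiples_of_finite P.primeCompl c
  choose C hC using ht
  have hCΓ :
      algebraMap S _ (∑ i, C i * Γ i) ∈ K.map (algebraMap S (Localization.AtPrime P)) := by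
    convert Ideal.mul_mem_left _ (algebraMap S _ t) hc using 1
    simp [hC, Algebra.smul_def, Finset.mul_sum, mul_assoc]
  obtain ⟨u, hu, huK⟩ :=
    (IsLocalization.algebraMap_mem_map_algebraMap_iff P.primeCompl _ K _).mp hCΓ
  have hCi : algebraMap S _ (C i) ∈ IsLocalRing.maximalIdeal (Localization.AtPrime P) :=
    Localization.AtPrime.map_eq_maximalIdeal (I := P) ▸ Ideal.mem_map_of_mem _ (hK C u hu huK i)
  rw [hC i, Algebra.smul_def] at hCi
  exact (Ideal.unit_mul_mem_iff_mem _ (IsLocalization.map_units _ t)).mp hCi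

section Generators

variable {R : Type*} [CommRing R]

theorem Ideal.span_pair_pow (x y : R) (N : ℕ) :
    Ideal.span {x, y} ^ N =
      Ideal.span (Set.range fun j : Fin (N + 1) ↦ x ^ (j : ℕ) * y ^ (N - j)) := by
  refine le_antisymm ?_ (Ideal.span_le.mpr <| Set.range_subset_iff.mpr fun ⟨j, hj⟩ ↦ ?_)
  · induction N with
    | zero => simp
    | succ N ih =>
      grw [pow_succ, ih, Ideal.span_mul_span', Ideal.span_le]
      rintro _ ⟨_, ⟨j, rfl⟩, _, hxy, rfl⟩
      apply Ideal.subset_span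
      obtain ⟨j, hj⟩ := j
      rcases hxy with rfl | rfl
      · refine ⟨⟨j + 1, by omega⟩, ?_⟩
        simp only [Nat.add_sub_add_right, pow_succ]
        ring
      · refine ⟨⟨j, by omega⟩, ?_⟩
        simp only [Nat.sub_add_comm (Nat.lt_succ_iff.mp hj), pow_succ]
        ring
  · obtain ⟨k, rfl⟩ := Nat.exists_eq_add_of_le (Nat.lt_succ_iff.mp hj)
    rw [add_tsub_cancel_left, pow_add]
    exact Ideal.mul_mem_mul (Ideal.pow_mem_pow (Ideal.subset_span (by simp)) _)
      (Ideal.pow_mem_pow (Ideal.subset_span (by simp)) _)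

def filtrationGenerator (x y z : R) (n s : ℕ) : Option (Fin (s + 1)) → R
  | none => z ^ (n + 2)
  | some j => z ^ (n + 1) * (x ^ (j : ℕ) * y ^ (s - j))

theorem span_range_filtrationGenerator (x y z : R) (n s : ℕ) :
    Ideal.span (Set.range (filtrationGenerator x y z n s)) =
      Ideal.span {z ^ (n + 2)} + Ideal.span {z ^ (n + 1)} * Ideal.span {x, y} ^ s := by
  rw [Ideal.span_pair_pow, Ideal.span_mul_span', Set.singleton_mul, ← Set.range_comp,
    Option.range_eq, Ideal.span_insert]
  rfl

theorem map_filtrationGenerator {S : Type*} [CommRing S] (f : R →+* S) (x y z : R) (n s : ℕ)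
    (i : Option (Fin (s + 1))) :
    f (filtrationGenerator x y z n s i) = filtrationGenerator (f x) (f y) (f z) n s i := by
  cases i <;> simp [filtrationGenerator]

end Generators

theorem filtration_mul_le {R : Type*} [CommRing R] {x y z : R} {σ : ℕ → ℕ}
    {I : ℕ → Ideal R}
    (hI0 : I 0 = ⊤)
    (hIn : ∀ n : ℕ, 1 ≤ n →
      I n = Ideal.span {z ^ (n + 2)} + Ideal.span {z ^ (n + 1)} * Ideal.span {x, y} ^ σ n)
    (m n : ℕ) : I m * I n ≤ I (m + n) := by
  rcases Nat.eq_zero_or_pos m with rfl | hm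
  · simp [hI0]
  rcases Nat.eq_zero_or_pos n with rfl | hn
  · simp [hI0]
  have hz : ∀ n, 1 ≤ n → I n ≤ Ideal.span {z ^ (n + 1)} := fun n hn ↦ by
    rw [hIn n hn]
    exact sup_le (Ideal.span_singleton_le_span_singleton.mpr (pow_dvd_pow z (by omega)))
      Ideal.mul_le_left
  calc I m * I n ≤ Ideal.span {z ^ (m + 1)} * Ideal.span {z ^ (n + 1)} :=
        Ideal.mul_mono (hz m hm) (hz n hn)
    _ = Ideal.span {z ^ (m + n + 2)} := by
        rw [Ideal.span_singleton_mul_span_singleton, ← pow_add]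
        ring_nf
    _ ≤ I (m + n) := by
        rw [hIn _ (by omega)]
        exact le_sup_left

section Example

variable {k : Type*} [Field k]

noncomputable def filtrationExponent (n s : ℕ) : Option (Fin (s + 1)) → Fin 3 →₀ ℕ
  | none => Finsupp.single 2 (n + 2)
  | some j => Finsupp.single 0 (j : ℕ) + Finsupp.single 1 (s - j) + Finsupp.single 2 (n + 1)

theorem filtrationExponent_eq_of_le {n s : ℕ} (hs : 1 ≤ s) (i j : Option (Fin (s + 1)))
    (h : filtrationExponent n s i ≤ filtrationExponent n s j) : i = j := by
  have h0 := h 0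
  have h1 := h 1
  have h2 := h 2
  rcases i with _ | ⟨i, hi⟩ <;> rcases j with _ | ⟨j, hj⟩ <;>
    simp [filtrationExponent] at h0 h1 h2 ⊢ <;> omega

theorem monomial_filtrationExponent (n s : ℕ) (i : Option (Fin (s + 1))) :
    monomial (filtrationExponent n s i) (1 : k) = filtrationGenerator (X 0) (X 1) (X 2) n s i := by
  cases i <;>
    simp [filtrationExponent, filtrationGenerator, X_pow_eq_monomial, monomial_mul, add_comm]

theorem length_fiberModule_span_filtrationGenerator (P : Ideal (MvPolynomial (Fin 3) k))
    [P.IsPrime] (hP : P = Ideal.span {X 0, X 1, X 2}) {x y z : Localization.AtPrime P}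
    (hx : x = algebraMap (MvPolynomial (Fin 3) k) (Localization.AtPrime P) (X 0))
    (hy : y = algebraMap (MvPolynomial (Fin 3) k) (Localization.AtPrime P) (X 1))
    (hz : z = algebraMap (MvPolynomial (Fin 3) k) (Localization.AtPrime P) (X 2))
    (n s : ℕ) (hs : 1 ≤ s) :
    Module.length (Localization.AtPrime P) (fiberModule (Localization.AtPrime P)
      (Ideal.span (Set.range (filtrationGenerator x y z n s)))) = ((s + 2 : ℕ) : ℕ∞) := by
  subst hx hy hz
  set alg := algebraMap (MvPolynomial (Fin 3) k) (Localization.AtPrime P)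
  have hP' : P = Ideal.span (Set.range X) := by
    rw [hP]
    congr 1
    ext
    simp [Fin.exists_fin_succ, eq_comm]
  have hg : filtrationGenerator (alg (X 0)) (alg (X 1)) (alg (X 2)) n s =
      fun i ↦ alg (monomial (filtrationExponent n s i) 1) := by
    ext i
    rw [monomial_filtrationExponent, map_filtrationGenerator]
  rw [hg, length_fiberModule_eq_card _ _ rfl]
  · simp [add_assoc, one_add_one_eq_two]
  intro c hc i
  refine mem_maximalIdeal_of_sum_mul_algebraMap_mem_map P
    (fun j ↦ monomial (filtrationExponent n s j) 1)
    (Ideal.span (Set.range X) *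
      Ideal.span (Set.range fun j ↦ monomial (filtrationExponent n s j) 1))
    (fun C u hu h j ↦ ?_) c ?_ i
  · rw [hP', mem_span_range_X_iff] at hu ⊢
    exact (mul_eq_zero.mp (constantCoeff_mul_eq_zero_of_sum_mul_monomial_mem
      (filtrationExponent_eq_of_le hs) C u h j)).resolve_right hu
  · rwa [Ideal.map_mul, ← hP', Localization.AtPrime.map_eq_maximalIdeal, Ideal.map_span,
      ← Set.range_comp]

end Example

theorem filtration_fiber_length_example
    (k : Type*) [Field k]
    (P : Ideal (MvPolynomial (Fin 3) k))
    (hP : P = Ideal.span {X 0, X 1, X 2}) [P.IsPrime]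
    (x y z : Localization.AtPrime P)
    (hx : x = algebraMap (MvPolynomial (Fin 3) k) (Localization.AtPrime P) (X 0))
    (hy : y = algebraMap (MvPolynomial (Fin 3) k) (Localization.AtPrime P) (X 1))
    (hz : z = algebraMap (MvPolynomial (Fin 3) k) (Localization.AtPrime P) (X 2))
    (σ : ℕ → ℕ) (hσ : ∀ n, 1 ≤ n → 1 ≤ σ n)
    (I : ℕ → Ideal (Localization.AtPrime P))
    (hI0 : I 0 = ⊤)
    (hIn : ∀ n : ℕ, 1 ≤ n →
      I n = Ideal.span {z ^ (n + 2)}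
            + Ideal.span {z ^ (n + 1)} * (Ideal.span {x, y}) ^ (σ n)) :
    (∀ m n : ℕ, I m * I n ≤ I (m + n)) ∧
    ∀ n : ℕ, 1 ≤ n →
      ∃ s : CompositionSeries (Submodule (Localization.AtPrime P)
              (fiberModule (Localization.AtPrime P) (I n))),
        s.head = ⊥ ∧ s.last = ⊤ ∧ s.length = σ n + 2 := by
  refine ⟨filtration_mul_le hI0 hIn, fun n hn ↦ exists_compositionSeries_of_length_eq ?_⟩
  rw [hIn n hn, ← span_range_filtrationGenerator]
  exact length_fiberModule_span_filtrationGenerator P hP hx hy hz n (σ n) (hσ n hn)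
end

section
/- Let R be a Noetherian local ring with maximal ideal m_R, let R → S be a finite ring extension with S reduced semi-local, and let J be an ideal of S with I = J ∩ R. Suppose m_R ∈ Ass_R(R/I). Then there exists a maximal ideal q of S such that q ∈ Ass_S(S/J). -/
/-!
Along the injection `R ⧸ I ↪ S ⧸ J`, `m_R` becomes an associated prime of the `R`-module
`S ⧸ J`: some `y ≠ 0` in `S ⧸ J` is killed by a power of every element of `m_R`. An associated
prime `q` of the Noetherian ring `S` containing `Ann_S(y)` then contains `m_R S`, so `q ∩ R = m_R`
by maximality of `m_R`, and `q` is maximal because `S` is integral over `R`.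
-/

open Submodule

theorem associatedPrimes_quotient_comap_subset {R S : Type*} [CommRing R] [CommRing S]
    [Algebra R S] (J : Ideal S) :
    associatedPrimes R (R ⧸ J.comap (algebraMap R S)) ⊆ associatedPrimes R (S ⧸ J) :=
  associatedPrimes.subset_of_injective
    (f := (Ideal.quotientMapₐ J (Algebra.ofId R S) le_rfl).toLinearMap)
    Ideal.quotientMap_injective

theorem exists_mem_associatedPrimes_comap_eq_of_isMaximal {R : Type*} (S : Type*) {M : Type*}
    [CommRing R] [CommRing S] [Algebra R S] [IsNoetherianRing S]
    [AddCommGroup M] [Module R M] [Module S M] [IsScalarTower R S M]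
    {p : Ideal R} [hpm : p.IsMaximal] (hp : p ∈ associatedPrimes R M) :
    ∃ q ∈ associatedPrimes S M, q.comap (algebraMap R S) = p := by
  obtain ⟨-, x, rfl⟩ := hp
  have hx : x ≠ 0 := by
    rintro rfl
    exact hpm.ne_top ((Ideal.eq_top_iff_one _).mpr
      (Ideal.le_radical (by simp [mem_colon_singleton])))
  obtain ⟨q, hq, hxq⟩ := exists_le_isAssociatedPrime_of_isNoetherianRing S x hx
  have hle : ((⊥ : Submodule R M).colon {x}).radical ≤ q.comap (algebraMap R S) := by
    rintro r ⟨n, hn⟩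
    rw [mem_colon_singleton, mem_bot, ← algebraMap_smul S] at hn
    refine hq.isPrime.mem_of_pow_mem n (hxq ?_)
    rwa [mem_colon_singleton, mem_bot, ← map_pow]
  exact ⟨q, hq, (hpm.eq_of_le (Ideal.comap_ne_top _ hq.isPrime.ne_top) hle).symm⟩

theorem maximal_associated_prime_ascends_general
    {R S : Type*} [CommRing R] [IsNoetherianRing R] [IsLocalRing R]
    [CommRing S] [Algebra R S]
    [Module.Finite R S]
    (J : Ideal S) (I : Ideal R) (hI : I = J.comap (algebraMap R S))
    (hass : IsLocalRing.maximalIdeal R ∈ associatedPrimes R (R ⧸ I)) :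
    ∃ q : Ideal S, q.IsMaximal ∧ q ∈ associatedPrimes S (S ⧸ J) := by
  subst hI
  have : IsNoetherianRing S := isNoetherian_of_tower R inferInstance
  obtain ⟨q, hq, hqm⟩ := exists_mem_associatedPrimes_comap_eq_of_isMaximal S
    (associatedPrimes_quotient_comap_subset J hass)
  have : q.IsPrime := hq.isPrime
  refine ⟨q, Ideal.isMaximal_of_isIntegral_of_isMaximal_comap (R := R) q ?_, hq⟩
  exact hqm ▸ IsLocalRing.maximalIdeal.isMaximal R

theorem maximal_associated_prime_ascends
    {R S : Type*} [CommRing R] [IsNoetherianRing R] [IsLocalRing R]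
    [CommRing S] [IsReduced S] [Algebra R S]
    (hinj : Function.Injective (algebraMap R S))
    [Module.Finite R S]
    (hsemilocal : {q : Ideal S | q.IsMaximal}.Finite)
    (J : Ideal S) (I : Ideal R) (hI : I = J.comap (algebraMap R S))
    (hass : IsLocalRing.maximalIdeal R ∈ associatedPrimes R (R ⧸ I)) :
    ∃ q : Ideal S, q.IsMaximal ∧ q ∈ associatedPrimes S (S ⧸ J) :=
  maximal_associated_prime_ascends_general J I hI hass
end
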